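/- (Symmetry Lemma) Let n be odd, η ∈ [0,1] and c : ZMod n → Fin 2 any configuration. Then for every t ∈ ℕ, the probability that the t-step evolution of the inverted configuration c̄ is exactly at its end state e(c̄) equals the probability that the t-step evolution of c is exactly at e(c): Φη^t(c̄)({e(c̄)}) = Φη^t(c)({e(c)}). (Since the end states are absorbing, this says that the classification time of c̄ has the same distribution as that of c, and in particular the classification qualities coincide.) -/

import Mathlib

open scoped ENNReal

/-- A configuration of the ring of `n` cells, each in a state from `Fin 2`. -/
abbrev Config (n : ℕ) := ZMod n → Fin 2

/-- The traffic-majority local rule `φ_η`. -/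
def phi (η : ℝ) (a b c : Fin 2) : ℝ :=
  if b = 0 then
    if a = 1 then (if c = 1 then 1 else 1 - η) else 0
  else
    if a = 0 ∧ c = 0 then 0 else if a = 1 ∧ c = 0 then η else 1

lemma phi_nonneg {η : ℝ} (h0 : 0 ≤ η) (h1 : η ≤ 1) (a b c : Fin 2) :
    0 ≤ phi η a b c := by
  unfold phi; split_ifs <;> linarith

lemma phi_le_one {η : ℝ} (h0 : 0 ≤ η) (h1 : η ≤ 1) (a b c : Fin 2) :
    phi η a b c ≤ 1 := by
  unfold phi; split_ifs <;> linarith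

/-- The probability (as an extended nonnegative real) that, starting from
configuration `c`, the cell at `x` is in state `σ` after one step. -/
noncomputable def cellWeight (n : ℕ) (η : ℝ) (c : Config n) (x : ZMod n) (σ : Fin 2) : ℝ≥0∞ :=
  if σ = 1 then ENNReal.ofReal (phi η (c (x - 1)) (c x) (c (x + 1)))
  else ENNReal.ofReal (1 - phi η (c (x - 1)) (c x) (c (x + 1)))

/-- The probability of the transition `c → c'` in one step: the cells are
updated independently. -/
noncomputable def stepFun (n : ℕ) [NeZero n] (η : ℝ) (c c' : Config n) : ℝ≥0∞ :=
  ∏ x : ZMod n, cellWeight n η c x (c' x)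

lemma stepFun_sum (n : ℕ) [NeZero n] {η : ℝ} (h0 : 0 ≤ η) (h1 : η ≤ 1)
    (c : Config n) : ∑ c' : Config n, stepFun n η c c' = 1 := by
  have h := Finset.prod_univ_sum (fun _ : ZMod n => (Finset.univ : Finset (Fin 2)))
    (fun x σ => cellWeight n η c x σ)
  rw [Fintype.piFinset_univ] at h
  have h2 : ∀ x : ZMod n, ∑ σ : Fin 2, cellWeight n η c x σ = 1 := by
    intro x
    rw [Fin.sum_univ_two]
    simp only [cellWeight]
    norm_num
    rw [← ENNReal.ofReal_add (by linarith [phi_le_one h0 h1 (c (x-1)) (c x) (c (x+1))])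
      (phi_nonneg h0 h1 (c (x-1)) (c x) (c (x+1)))]
    norm_num
  rw [Finset.prod_congr rfl (fun x _ => h2 x), Finset.prod_const_one] at h
  exact h.symm

/-- The global transition `Φ_η` of the traffic-majority rule, as a PMF. -/
noncomputable def step (n : ℕ) [NeZero n] (η : ℝ) (h0 : 0 ≤ η) (h1 : η ≤ 1) (c : Config n) :
    PMF (Config n) :=
  PMF.ofFintype (stepFun n η c) (stepFun_sum n h0 h1 c)

/-- The `t`-step distribution `Φ_η^t(c)`, obtained by `t`-fold monadic bind. -/
noncomputable def iter (n : ℕ) [NeZero n] (η : ℝ) (h0 : 0 ≤ η) (h1 : η ≤ 1) :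
    ℕ → Config n → PMF (Config n)
  | 0, c => PMF.pure c
  | (t + 1), c => (step n η h0 h1 c).bind (iter n η h0 h1 t)

/-- The inversion `c̄` of a configuration: `c̄(x) = 1 - c(-x)`. -/
def conf_inv (n : ℕ) (c : Config n) : Config n := fun x => 1 - c (-x)

/-- The constant configuration with all cells in state `σ`. -/
def endSt (n : ℕ) (σ : Fin 2) : Config n := fun _ => σ

/-- The number of cells of `c` in state 1. -/
def ones (n : ℕ) [NeZero n] (c : Config n) : ℕ :=
  (Finset.univ.filter fun x => c x = 1).card

/-- The correct end state for the configuration `c` (`n` odd):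
`e₁` if more than half of the cells are in state 1, and `e₀` otherwise. -/
def target (n : ℕ) [NeZero n] (c : Config n) : Config n :=
  if n < 2 * ones n c then endSt n 1 else endSt n 0

/-- The 1-block of length `ℓ`. -/
def block (n ℓ : ℕ) : Config n := fun x => if x.val < ℓ then 1 else 0

lemma conf_inv_invol (n : ℕ) : Function.Involutive (conf_inv n) := by
  intro c; funext x
  have hv : ∀ v : Fin 2, 1 - (1 - v) = v := by decide
  simp only [conf_inv, neg_neg, hv]

lemma phi_inv (η : ℝ) (a b c : Fin 2) :
    phi η (1 - c) (1 - b) (1 - a) = 1 - phi η a b c := by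
  fin_cases a <;> fin_cases b <;> fin_cases c <;>
    simp [phi, show (1 - (0:Fin 2)) = 1 from rfl, show (1 - (1:Fin 2)) = 0 from rfl] <;> ring

lemma cellWeight_inv (n : ℕ) [NeZero n] (η : ℝ) (h0 : 0 ≤ η) (h1 : η ≤ 1)
    (c : Config n) (x : ZMod n) (τ : Fin 2) :
    cellWeight n η (conf_inv n c) (-x) (1 - τ) = cellWeight n η c x τ := by
  have harg : phi η ((conf_inv n c) (-x - 1)) ((conf_inv n c) (-x)) ((conf_inv n c) (-x + 1))
      = 1 - phi η (c (x - 1)) (c x) (c (x + 1)) := by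
    have e1 : -(-x - 1) = x + 1 := by ring
    have e2 : -(-x + 1) = x - 1 := by ring
    simp only [conf_inv, neg_neg, e1, e2]
    exact phi_inv η (c (x - 1)) (c x) (c (x + 1))
  fin_cases τ <;>
    simp only [cellWeight, harg, show (1 - (0:Fin 2)) = 1 from rfl,
      show (1 - (1:Fin 2)) = 0 from rfl] <;> norm_num <;>
    · congr 1; ring

lemma stepFun_inv (n : ℕ) [NeZero n] (η : ℝ) (h0 : 0 ≤ η) (h1 : η ≤ 1)
    (c c' : Config n) :
    stepFun n η (conf_inv n c) (conf_inv n c') = stepFun n η c c' := by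
  unfold stepFun
  refine (Fintype.prod_equiv (Equiv.neg (ZMod n))
    (fun x => cellWeight n η c x (c' x))
    (fun x => cellWeight n η (conf_inv n c) x ((conf_inv n c') x)) fun x => ?_).symm
  have hc' : (conf_inv n c') (Equiv.neg (ZMod n) x) = 1 - c' x := by
    simp [conf_inv, Equiv.neg]
  rw [show (Equiv.neg (ZMod n)) x = -x from rfl] at hc' ⊢
  rw [hc']
  exact (cellWeight_inv n η h0 h1 c x (c' x)).symm

lemma iter_inv (n : ℕ) [NeZero n] (η : ℝ) (h0 : 0 ≤ η) (h1 : η ≤ 1) (t : ℕ)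
    (c c' : Config n) :
    iter n η h0 h1 t (conf_inv n c) (conf_inv n c') = iter n η h0 h1 t c c' := by
  induction t generalizing c c' with
  | zero =>
    simp only [iter, PMF.pure_apply]
    congr 1
    simp only [eq_iff_iff]
    constructor
    · intro h; exact (conf_inv_invol n).injective h
    · intro h; rw [h]
  | succ t ih =>
    simp only [iter, PMF.bind_apply]
    rw [← ((conf_inv_invol n).toPerm).tsum_eq
      (fun d => step n η h0 h1 (conf_inv n c) d * iter n η h0 h1 t d (conf_inv n c'))]
    refine tsum_congr fun d => ?_
    have hs : step n η h0 h1 (conf_inv n c) (conf_inv n d) = step n η h0 h1 c d := by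
      simp only [step, PMF.ofFintype_apply]
      exact stepFun_inv n η h0 h1 c d
    simp only [Function.Involutive.coe_toPerm]
    rw [hs, ih d c']

lemma target_inv (n : ℕ) [NeZero n] (hn : Odd n) (c : Config n) :
    target n (conf_inv n c) = conf_inv n (target n c) := by
  have hcard : Fintype.card (ZMod n) = n := ZMod.card n
  have hones : ones n (conf_inv n c) = n - ones n c := by
    unfold ones
    have h1 : (Finset.univ.filter fun x => (conf_inv n c) x = 1)
        = (Finset.univ.filter fun x => c (-x) = 0) := by
      refine Finset.filter_congr fun x _ => ?_
      have hv : ∀ v : Fin 2, (1 - v = 1 ↔ v = 0) := by decide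
      simp only [conf_inv]
      exact hv (c (-x))
    rw [h1]
    have h2 : (Finset.univ.filter fun x : ZMod n => c (-x) = 0).card
        = (Finset.univ.filter fun x : ZMod n => c x = 0).card := by
      refine Finset.card_nbij (fun x => -x) ?_ ?_ ?_
      · intro x hx; simp at hx ⊢; exact hx
      · intro a ha b hb h; simpa using h
      · intro y hy; exact ⟨-y, by simpa using hy, by simp⟩
    rw [h2]
    have h3 := Finset.card_filter_add_card_filter_not
      (s := (Finset.univ : Finset (ZMod n))) (p := fun x => c x = 1)
    have h4 : (Finset.univ.filter fun x : ZMod n => ¬ c x = 1)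
        = (Finset.univ.filter fun x : ZMod n => c x = 0) := by
      have hv : ∀ v : Fin 2, (¬ v = 1 ↔ v = 0) := by decide
      refine Finset.filter_congr fun x _ => ?_
      exact hv (c x)
    rw [h4] at h3
    simp only [Finset.card_univ, hcard] at h3
    omega
  have hle : ones n c ≤ n := by
    have := Finset.card_filter_le (Finset.univ : Finset (ZMod n)) (fun x => c x = 1)
    simpa [ones, Finset.card_univ, hcard] using this
  have hne : n ≠ 2 * ones n c := fun h => (Nat.not_even_iff_odd.mpr hn) ⟨ones n c, by omega⟩
  have hinv0 : conf_inv n (endSt n 0) = endSt n 1 := by funext x; rfl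
  have hinv1 : conf_inv n (endSt n 1) = endSt n 0 := by funext x; rfl
  unfold target
  rw [hones]
  by_cases h : n < 2 * ones n c
  · rw [if_pos h, if_neg (by omega), hinv1]
  · rw [if_neg h, if_pos (by omega), hinv0]

/-- Symmetry Lemma: for `n` odd, the probability that the `t`-step
evolution of the inverted configuration `c̄` is at its end state `e(c̄)` equals
the probability that the `t`-step evolution of `c` is at `e(c)`. -/
theorem symmetry_lemma (n : ℕ) [NeZero n] (hn : Odd n) (η : ℝ)
    (h0 : 0 ≤ η) (h1 : η ≤ 1) (c : Config n) (t : ℕ) :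
    iter n η h0 h1 t (conf_inv n c) (target n (conf_inv n c))
      = iter n η h0 h1 t c (target n c) := by
  rw [target_inv n hn c]
  exact iter_inv n η h0 h1 t c (target n c)
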